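/- The algorithm of the paper defines a retraction: the map sending each tiling f : G_{m,n} → {0,1} to the output of the dappling algorithm is a function r from tilings onto L-dappled tilings satisfying r(f) = f for every L-dappled f; in particular r ∘ r = r and r is surjective onto the set of L-dappled tilings. -/

import Mathlib

def vioH (f : ℕ → ℕ → Fin 2) (p : ℕ) (t : Fin 2) (i j : ℕ) : Prop :=
  p ≤ i ∧ ∀ s ≤ p, f (i - s) j = t

def vioV (f : ℕ → ℕ → Fin 2) (q : ℕ) (t : Fin 2) (i j : ℕ) : Prop :=
  q ≤ j ∧ ∀ s ≤ q, f i (j - s) = t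

def vioAny (p q : Fin 2 → ℕ) (f : ℕ → ℕ → Fin 2) (i j : ℕ) : Prop :=
  ∃ t : Fin 2, vioH f (p t) t i j ∨ vioV f (q t) t i j

def Dappled (m n : ℕ) (p q : Fin 2 → ℕ) (f : ℕ → ℕ → Fin 2) : Prop :=
  ∀ i < m, ∀ j < n, ¬ vioAny p q f i j

def upd (f : ℕ → ℕ → Fin 2) (a b : ℕ) (v : Fin 2) : ℕ → ℕ → Fin 2 :=
  fun i j => if i = a ∧ j = b then v else f i j

def surgery3 (f : ℕ → ℕ → Fin 2) (i j : ℕ) : ℕ → ℕ → Fin 2 :=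
  upd (upd (upd f i j (f (i-1) (j-1))) (i-1) j (1 - f (i-1) (j-1))) i (j-1)
    (1 - f (i-1) (j-1))

def step (m n : ℕ) (p q : Fin 2 → ℕ) (f g : ℕ → ℕ → Fin 2) : Prop :=
  ∃ i j, i < m ∧ j < n ∧ vioAny p q f i j ∧
    (∀ i' j', i' < m → j' < n → i' + j' < i + j → ¬ vioAny p q f i' j') ∧
    ((¬ vioAny p q (upd f i j (1 - f i j)) i j ∧ g = upd f i j (1 - f i j)) ∨
     (vioAny p q (upd f i j (1 - f i j)) i j ∧ g = surgery3 f i j))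

/-! Cells are repaired in order of increasing weight `i + j`. Repairing a violation of minimal
weight, by a flip or, when the flip fails, by the 3-cell surgery, creates no violation of weight
at most that of the repaired cell. So the vector counting violations on each weight level
decreases lexicographically at every step, the algorithm terminates in a dappled tiling, and
sending each tiling to such a result (to itself when already dappled) is the retraction. -/

theorem Relation.exists_reflTransGen_of_exists_lt {α β : Type*} [LT β] [WellFoundedLT β]
    {r : α → α → Prop} {P : α → Prop} (μ : α → β) (h : ∀ a, ¬ P a → ∃ b, r a b ∧ μ b < μ a)
    (a : α) : ∃ b, Relation.ReflTransGen r a b ∧ P b := by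
  induction a using (InvImage.wf μ wellFounded_lt).induction with
  | h a ih =>
    by_cases ha : P a
    · exact ⟨a, .refl, ha⟩
    · obtain ⟨b, hab, hlt⟩ := h a ha
      obtain ⟨c, hbc, hc⟩ := ih b hlt
      exact ⟨c, .head hab hbc, hc⟩

theorem Relation.exists_retraction_of_exists_reflTransGen {α : Type*} {r : α → α → Prop}
    {P : α → Prop} (h : ∀ a, ∃ b, Relation.ReflTransGen r a b ∧ P b) :
    ∃ ρ : α → α, (∀ a, Relation.ReflTransGen r a (ρ a)) ∧ (∀ a, P (ρ a)) ∧
      (∀ a, P a → ρ a = a) ∧ ρ ∘ ρ = ρ ∧ (∀ b, P b → ∃ a, ρ a = b) := by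
  classical
  choose target hreach htarget using h
  let ρ a := if P a then a else target a
  have hρ : ∀ a, Relation.ReflTransGen r a (ρ a) ∧ P (ρ a) := fun a => by
    by_cases ha : P a
    · simp only [ρ, if_pos ha]
      exact ⟨.refl, ha⟩
    · simp only [ρ, if_neg ha]
      exact ⟨hreach a, htarget a⟩
  have hρfix : ∀ a, P a → ρ a = a := fun a ha => if_pos ha
  exact ⟨ρ, fun a => (hρ a).1, fun a => (hρ a).2, hρfix, funext fun a => hρfix _ (hρ a).2,
    fun b hb => ⟨b, hρfix b hb⟩⟩

lemma fin_two_one_sub_ne_self (a : Fin 2) : 1 - a ≠ a := by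
  revert a; decide

section Cells

variable {f : ℕ → ℕ → Fin 2} {a b x y i j : ℕ} {v : Fin 2}

lemma upd_apply_self : upd f a b v a b = v := if_pos ⟨rfl, rfl⟩

lemma upd_apply_of_ne (h : ¬(x = a ∧ y = b)) : upd f a b v x y = f x y := if_neg h

lemma surgery3_apply_self (hi : 1 ≤ i) (hj : 1 ≤ j) :
    surgery3 f i j i j = f (i - 1) (j - 1) := by
  rw [surgery3, upd_apply_of_ne (by omega), upd_apply_of_ne (by omega), upd_apply_self]

lemma surgery3_apply_left (hi : 1 ≤ i) : surgery3 f i j (i - 1) j = 1 - f (i - 1) (j - 1) := by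
  rw [surgery3, upd_apply_of_ne (by omega), upd_apply_self]

lemma surgery3_apply_below : surgery3 f i j i (j - 1) = 1 - f (i - 1) (j - 1) := by
  rw [surgery3, upd_apply_self]

lemma surgery3_apply_of_ne (h₁ : ¬(x = i ∧ y = j)) (h₂ : ¬(x = i - 1 ∧ y = j))
    (h₃ : ¬(x = i ∧ y = j - 1)) : surgery3 f i j x y = f x y := by
  rw [surgery3, upd_apply_of_ne h₃, upd_apply_of_ne h₂, upd_apply_of_ne h₁]

lemma surgery3_swap : surgery3 (Function.swap f) j i = Function.swap (surgery3 f i j) := by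
  funext x y
  simp only [surgery3, upd, Function.swap]
  split_ifs <;> first | rfl | omega

end Cells

section Runs

variable {f g : ℕ → ℕ → Fin 2} {p s x y : ℕ} {t : Fin 2}

lemma vioV_iff_vioH_swap : vioV f p t x y ↔ vioH (Function.swap f) p t y x := Iff.rfl

lemma vioH.run (hp : 2 ≤ p) (h : vioH f p t x y) :
    2 ≤ x ∧ f (x - 2) y = f x y ∧ f (x - 1) y = f x y := by
  have hx : f x y = t := h.2 0 (Nat.zero_le p)
  exact ⟨hp.trans h.1, (h.2 2 hp).trans hx.symm, (h.2 1 (by omega)).trans hx.symm⟩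

lemma not_vioH_of_ne (hs : s < p) (hne : f (x - s) y ≠ f (x - (s + 1)) y) :
    ¬ vioH f p t x y :=
  fun h => hne ((h.2 s hs.le).trans (h.2 (s + 1) hs).symm)

lemma vioH_congr (h : ∀ s, g (x - s) y = f (x - s) y) : vioH g p t x y ↔ vioH f p t x y := by
  simp only [vioH, h]

lemma vioH.of_eq_left (hp : 1 ≤ p) (hagree : ∀ s, 1 ≤ s → g (x - s) y = f (x - s) y)
    (hf : f x y = f (x - 1) y) (h : vioH g p t x y) : vioH f p t x y := by
  refine ⟨h.1, fun s hs => ?_⟩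
  rcases Nat.eq_zero_or_pos s with rfl | hs₀
  · rw [Nat.sub_zero, hf, ← hagree 1 le_rfl]
    exact h.2 1 hp
  · rw [← hagree s hs₀]
    exact h.2 s hs

end Runs

section Repair

variable {p q : Fin 2 → ℕ} {f : ℕ → ℕ → Fin 2} {i j x y : ℕ}

lemma vioAny.run (hp : ∀ t, 2 ≤ p t) (hq : ∀ t, 2 ≤ q t) (h : vioAny p q f x y) :
    (2 ≤ x ∧ f (x - 2) y = f x y ∧ f (x - 1) y = f x y) ∨
      (2 ≤ y ∧ f x (y - 2) = f x y ∧ f x (y - 1) = f x y) := by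
  obtain ⟨t, h | h⟩ := h
  · exact .inl (h.run (hp t))
  · exact .inr ((vioV_iff_vioH_swap.1 h).run (hq t))

/-- When flipping `(i, j)` leaves it in violation, one of the two violations is horizontal and
the other vertical, which produces runs of equal colours to the left of and below `(i, j)`. -/
lemma runs_of_vioAny_upd_one_sub (hp : ∀ t, 2 ≤ p t) (hq : ∀ t, 2 ≤ q t)
    (h : vioAny p q f i j) (h' : vioAny p q (upd f i j (1 - f i j)) i j) :
    2 ≤ i ∧ 2 ≤ j ∧ f (i - 2) j = f (i - 1) j ∧ f i (j - 2) = f i (j - 1) := by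
  have hne := fin_two_one_sub_ne_self (f i j)
  rcases h.run hp hq with ⟨hi, h₂, h₁⟩ | ⟨hj, h₂, h₁⟩ <;>
    rcases h'.run hp hq with ⟨hi', h₂', h₁'⟩ | ⟨hj', h₂', h₁'⟩ <;>
    rw [upd_apply_self] at h₁' h₂' <;>
    rw [upd_apply_of_ne (by omega)] at h₁' h₂'
  · exact absurd (h₁'.symm.trans h₁) hne
  · exact ⟨hi, hj', h₂.trans h₁.symm, h₂'.trans h₁'.symm⟩
  · exact ⟨hi', hj, h₂'.trans h₁'.symm, h₂.trans h₁.symm⟩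
  · exact absurd (h₁'.symm.trans h₁) hne

end Repair

section Surgery

variable {f : ℕ → ℕ → Fin 2} {p i j x y : ℕ} {t : Fin 2}

lemma vioH_surgery3 (hp : 2 ≤ p) (hi : 2 ≤ i) (hj : 2 ≤ j) (hrun : f (i - 2) j = f (i - 1) j)
    (hw : x + y ≤ i + j) (h : vioH (surgery3 f i j) p t x y) :
    vioH f p t x y ∧ ¬(x = i ∧ y = j) := by
  have hne := fin_two_one_sub_ne_self (f (i - 1) (j - 1))
  have hdiag : surgery3 f i j (i - 1) (j - 1) = f (i - 1) (j - 1) :=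
    surgery3_apply_of_ne (by omega) (by omega) (by omega)
  have hself : ¬(x = i ∧ y = j) := by
    rintro ⟨rfl, rfl⟩
    refine not_vioH_of_ne (s := 0) (by omega) ?_ h
    rw [Nat.sub_zero, surgery3_apply_self (by omega) (by omega), zero_add,
      surgery3_apply_left (by omega)]
    exact hne.symm
  refine ⟨?_, hself⟩
  -- Apart from (i, j), the rows of weight ≤ i + j meeting a changed cell end at
  -- (i - 1, j), (i, j - 1) or (i + 1, j - 1).
  by_cases hleft : x = i - 1 ∧ y = j
  · obtain ⟨rfl, rfl⟩ := hleft
    refine h.of_eq_left (by omega) (fun s hs => surgery3_apply_of_ne ?_ ?_ ?_) ?_ <;> try omega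
    rw [← hrun, show i - 1 - 1 = i - 2 by omega]
  by_cases hbelow : x = i ∧ y = j - 1
  · obtain ⟨rfl, rfl⟩ := hbelow
    refine absurd h (not_vioH_of_ne (s := 0) (by omega) ?_)
    rw [Nat.sub_zero, surgery3_apply_below, zero_add, hdiag]
    exact hne
  by_cases hbelowRight : x = i + 1 ∧ y = j - 1
  · obtain ⟨rfl, rfl⟩ := hbelowRight
    refine absurd h (not_vioH_of_ne (s := 1) hp ?_)
    rw [Nat.add_sub_cancel, surgery3_apply_below, show i + 1 - (1 + 1) = i - 1 by omega, hdiag]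
    exact hne
  exact (vioH_congr fun s => surgery3_apply_of_ne (by omega) (by omega) (by omega)).1 h

end Surgery

section Termination

variable {p q : Fin 2 → ℕ}

def Repairs (p q : Fin 2 → ℕ) (f g : ℕ → ℕ → Fin 2) (i j : ℕ) : Prop :=
  ∀ x y, x + y ≤ i + j → vioAny p q g x y → vioAny p q f x y ∧ ¬(x = i ∧ y = j)

lemma repairs_surgery3 {f : ℕ → ℕ → Fin 2} {i j : ℕ} (hp : ∀ t, 2 ≤ p t) (hq : ∀ t, 2 ≤ q t)
    (hi : 2 ≤ i) (hj : 2 ≤ j) (hrowRun : f (i - 2) j = f (i - 1) j)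
    (hcolRun : f i (j - 2) = f i (j - 1)) : Repairs p q f (surgery3 f i j) i j := by
  rintro x y hw ⟨t, h | h⟩
  · obtain ⟨hf, hne⟩ := vioH_surgery3 (hp t) hi hj hrowRun hw h
    exact ⟨⟨t, .inl hf⟩, hne⟩
  · rw [vioV_iff_vioH_swap, ← surgery3_swap] at h
    obtain ⟨hf, hne⟩ := vioH_surgery3 (hq t) hj hi hcolRun (by omega) h
    exact ⟨⟨t, .inr hf⟩, fun ⟨hx, hy⟩ => hne ⟨hy, hx⟩⟩

lemma repairs_upd {f : ℕ → ℕ → Fin 2} {i j : ℕ} {v : Fin 2}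
    (hfixed : ¬ vioAny p q (upd f i j v) i j) : Repairs p q f (upd f i j v) i j := by
  intro x y hw h
  have hne : ¬(x = i ∧ y = j) := by
    rintro ⟨rfl, rfl⟩
    exact hfixed h
  refine ⟨?_, hne⟩
  have hrow : ∀ s, upd f i j v (x - s) y = f (x - s) y := fun s => upd_apply_of_ne (by omega)
  have hcol : ∀ s, upd f i j v x (y - s) = f x (y - s) := fun s => upd_apply_of_ne (by omega)
  simpa only [vioAny, vioH, vioV, hrow, hcol] using h

open Classical in
noncomputable def levelViolations (m n : ℕ) (p q : Fin 2 → ℕ) (f : ℕ → ℕ → Fin 2) (k : ℕ) :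
    Finset (ℕ × ℕ) :=
  {x ∈ Finset.range m ×ˢ Finset.range n | x.1 + x.2 = k ∧ vioAny p q f x.1 x.2}

noncomputable def violationProfile (m n : ℕ) (p q : Fin 2 → ℕ) (f : ℕ → ℕ → Fin 2) :
    Lex (Fin (m + n) → ℕ) :=
  toLex fun k => (levelViolations m n p q f k).card

lemma violationProfile_lt_of_repairs {m n i j : ℕ} {f g : ℕ → ℕ → Fin 2} (hi : i < m)
    (hj : j < n) (hv : vioAny p q f i j)
    (hmin : ∀ i' j', i' < m → j' < n → i' + j' < i + j → ¬ vioAny p q f i' j')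
    (hrep : Repairs p q f g i j) :
    violationProfile m n p q g < violationProfile m n p q f := by
  classical
  have hsub : ∀ k ≤ i + j, levelViolations m n p q g k ⊆ levelViolations m n p q f k := by
    intro k hk x hx
    simp only [levelViolations, Finset.mem_filter] at hx ⊢
    exact ⟨hx.1, hx.2.1, (hrep x.1 x.2 (by omega) hx.2.2).1⟩
  have hempty : ∀ k < i + j, levelViolations m n p q f k = ∅ := by
    intro k hk
    refine Finset.filter_eq_empty_iff.2 fun x hx ⟨hxk, hxv⟩ => ?_
    simp only [Finset.mem_product, Finset.mem_range] at hx
    exact hmin x.1 x.2 hx.1 hx.2 (by omega) hxv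
  refine ⟨⟨i + j, by omega⟩, fun k hk => ?_, Finset.card_lt_card ⟨hsub _ le_rfl, fun h => ?_⟩⟩
  · have hk : (k : ℕ) < i + j := hk
    have hg : levelViolations m n p q g k = ∅ := Finset.subset_empty.1 (hempty k hk ▸ hsub k hk.le)
    simp only [violationProfile, Pi.toLex_apply, hempty k hk, hg]
  · have hij : (i, j) ∈ levelViolations m n p q f (i + j) := by
      simp only [levelViolations, Finset.mem_filter, Finset.mem_product, Finset.mem_range,
        true_and]
      exact ⟨⟨hi, hj⟩, hv⟩
    have := h hij
    simp only [levelViolations, Finset.mem_filter] at this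
    exact (hrep i j le_rfl this.2.2).2 ⟨rfl, rfl⟩

lemma exists_min_weight_violation {m n : ℕ} {f : ℕ → ℕ → Fin 2} (hf : ¬ Dappled m n p q f) :
    ∃ i j, i < m ∧ j < n ∧ vioAny p q f i j ∧
      ∀ i' j', i' < m → j' < n → i' + j' < i + j → ¬ vioAny p q f i' j' := by
  classical
  simp only [Dappled, not_forall, not_not] at hf
  obtain ⟨i₀, hi₀, j₀, hj₀, hv₀⟩ := hf
  obtain ⟨⟨i, j⟩, hmem, hmin⟩ :=
    Finset.exists_min_image {x ∈ Finset.range m ×ˢ Finset.range n | vioAny p q f x.1 x.2}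
      (fun x => x.1 + x.2) ⟨(i₀, j₀), by simp [hi₀, hj₀, hv₀]⟩
  simp only [Finset.mem_filter, Finset.mem_product, Finset.mem_range] at hmem hmin
  exact ⟨i, j, hmem.1.1, hmem.1.2, hmem.2, fun i' j' hi' hj' hlt hv =>
    (hmin (i', j') ⟨⟨hi', hj'⟩, hv⟩).not_gt hlt⟩

lemma exists_step_violationProfile_lt {m n : ℕ} (hp : ∀ t, 2 ≤ p t) (hq : ∀ t, 2 ≤ q t)
    {f : ℕ → ℕ → Fin 2} (hf : ¬ Dappled m n p q f) :
    ∃ g, step m n p q f g ∧ violationProfile m n p q g < violationProfile m n p q f := by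
  obtain ⟨i, j, hi, hj, hv, hmin⟩ := exists_min_weight_violation hf
  by_cases hflip : vioAny p q (upd f i j (1 - f i j)) i j
  · obtain ⟨hi₂, hj₂, hrowRun, hcolRun⟩ := runs_of_vioAny_upd_one_sub hp hq hv hflip
    exact ⟨_, ⟨i, j, hi, hj, hv, hmin, .inr ⟨hflip, rfl⟩⟩, violationProfile_lt_of_repairs hi hj hv
      hmin (repairs_surgery3 hp hq hi₂ hj₂ hrowRun hcolRun)⟩
  · exact ⟨_, ⟨i, j, hi, hj, hv, hmin, .inl ⟨hflip, rfl⟩⟩,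
      violationProfile_lt_of_repairs hi hj hv hmin (repairs_upd hflip)⟩

end Termination

theorem stmt8_general (m n : ℕ) (p q : Fin 2 → ℕ)
    (hp : ∀ t, 2 ≤ p t) (hq : ∀ t, 2 ≤ q t) :
    ∃ r : (ℕ → ℕ → Fin 2) → (ℕ → ℕ → Fin 2),
      (∀ f, Relation.ReflTransGen (step m n p q) f (r f)) ∧
      (∀ f, Dappled m n p q (r f)) ∧
      (∀ f, Dappled m n p q f → r f = f) ∧
      r ∘ r = r ∧
      (∀ g, Dappled m n p q g → ∃ f, r f = g) :=
  Relation.exists_retraction_of_exists_reflTransGen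
    (Relation.exists_reflTransGen_of_exists_lt (violationProfile m n p q)
      fun _ => exists_step_violationProfile_lt hp hq)

/-- The dappling algorithm defines a retraction `r` from the set of tilings
onto the set of `L`-dappled tilings: `r f` is obtained from `f` by algorithm
steps, `r f` is always `L`-dappled, `r` fixes every `L`-dappled tiling,
`r ∘ r = r`, and `r` is surjective onto the `L`-dappled tilings. -/
theorem stmt8 (m n : ℕ) (hm : 1 ≤ m) (hn : 1 ≤ n) (p q : Fin 2 → ℕ)
    (hp : ∀ t, 2 ≤ p t) (hq : ∀ t, 2 ≤ q t) :
    ∃ r : (ℕ → ℕ → Fin 2) → (ℕ → ℕ → Fin 2),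
      (∀ f, Relation.ReflTransGen (step m n p q) f (r f)) ∧
      (∀ f, Dappled m n p q (r f)) ∧
      (∀ f, Dappled m n p q f → r f = f) ∧
      r ∘ r = r ∧
      (∀ g, Dappled m n p q g → ∃ f, r f = g) :=
  stmt8_general m n p q hp hq
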